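/- arXiv:2207.13637 — 3 statements merged into one kernel-verified Lean document; each statement's English description precedes it below -/
import Mathlib

section
/- For n ≥ 2, the stabilizer of a point in the natural action of the symmetric group S_n on {1,…,n} is a maximal subgroup of S_n. -/
/-- For `n ≥ 2`, the stabilizer of a point in the natural action of the symmetric
group `S_n` on `{1, …, n}` is a maximal (proper) subgroup of `S_n`. -/
theorem stmt_1 (n : ℕ) (hn : 2 ≤ n) (a : Fin n) :
    IsCoatom (MulAction.stabilizer (Equiv.Perm (Fin n)) a) := by
  have : Nontrivial (Fin n) := Fin.nontrivial_iff_two_le.mpr hn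
  exact MulAction.IsPreprimitive.isCoatom_stabilizer_of_isPreprimitive _ a
end

section
/- Let k ⊆ L ⊆ M be fields with M/k a finite Galois extension, and let x be a closed point datum given by an intermediate field L with [L : k] = n such that Gal(M/k) acting on the n embeddings of L into M is the full symmetric group. If k' / k is any subextension of L/k, then [k' : k] ∈ {1, n}. -/
/-!
Under the Galois correspondence, subextensions of `L` correspond to subgroups lying between
`Gal(M/L)` and `Gal(M/k)`. Through `e`, `Gal(M/L)` becomes the stabilizer of the inclusion
`L → M` in the full symmetric group on the embeddings, and a point stabilizer is a maximal
subgroup of a symmetric group (or the whole group, when there is only one point).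
-/

open MulAction

theorem Equiv.Perm.isCoatom_stabilizer_or_eq_top {X : Type*} (x : X) :
    IsCoatom (stabilizer (Perm X) x) ∨ stabilizer (Perm X) x = ⊤ := by
  rcases subsingleton_or_nontrivial X with hX | hX
  · exact Or.inr (eq_top_iff.mpr fun σ _ ↦ Subsingleton.elim (σ • x) x)
  · exact Or.inl (IsPreprimitive.isCoatom_stabilizer_of_isPreprimitive (Perm X) x)

namespace IntermediateField

variable {k M : Type*} [Field k] [Field M] [Algebra k M]

theorem fixingSubgroup_eq_comap_stabilizer (L : IntermediateField k M)
    (e : (M ≃ₐ[k] M) ≃* Equiv.Perm (L →ₐ[k] M))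
    (he : ∀ σ f, e σ f = σ.toAlgHom.comp f) :
    L.fixingSubgroup = (stabilizer (Equiv.Perm (L →ₐ[k] M)) L.val).comap e.toMonoidHom := by
  ext σ
  rw [mem_fixingSubgroup_iff, Subgroup.mem_comap, mem_stabilizer_iff, Equiv.Perm.smul_def,
    MulEquiv.coe_toMonoidHom, he, AlgHom.ext_iff]
  exact ⟨fun h x ↦ h x x.2, fun h x hx ↦ h ⟨x, hx⟩⟩

end IntermediateField

namespace IsGalois

variable {k M : Type*} [Field k] [Field M] [Algebra k M] [FiniteDimensional k M] [IsGalois k M]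

theorem isCoatom_fixingSubgroup_iff (L : IntermediateField k M) :
    IsCoatom L.fixingSubgroup ↔ IsAtom L :=
  isAtom_dual_iff_isCoatom.symm.trans (intermediateFieldEquivSubgroup.isAtom_iff L)

theorem fixingSubgroup_eq_top_iff (L : IntermediateField k M) :
    L.fixingSubgroup = ⊤ ↔ L = ⊥ := by
  rw [← IntermediateField.fixingSubgroup_bot]
  exact intermediateFieldEquivSubgroup.injective.eq_iff

end IsGalois

theorem stmt_9_general (k M : Type*) [Field k] [Field M] [Algebra k M]
    [FiniteDimensional k M] [IsGalois k M]
    (L : IntermediateField k M)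
    (n : ℕ) (hn : Module.finrank k L = n)
    (e : (M ≃ₐ[k] M) ≃* Equiv.Perm (L →ₐ[k] M))
    (hcompat : ∀ (σ : M ≃ₐ[k] M) (f : L →ₐ[k] M),
      e σ f = σ.toAlgHom.comp f)
    (k' : IntermediateField k M) (hk' : k' ≤ L) :
    Module.finrank k k' = 1 ∨ Module.finrank k k' = n := by
  have hL : IsAtom L ∨ L = ⊥ := by
    rw [← IsGalois.isCoatom_fixingSubgroup_iff, ← IsGalois.fixingSubgroup_eq_top_iff,
      IntermediateField.fixingSubgroup_eq_comap_stabilizer L e hcompat,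
      ← MulEquiv.coe_comapSubgroup, OrderIso.isCoatom_iff, ← (MulEquiv.comapSubgroup e).map_top,
      (MulEquiv.comapSubgroup e).apply_eq_iff_eq]
    exact Equiv.Perm.isCoatom_stabilizer_or_eq_top _
  have hk'L : k' = ⊥ ∨ k' = L := by
    rcases hL with hL | rfl
    · exact hL.le_iff.mp hk'
    · exact Or.inl (le_bot_iff.mp hk')
  rcases hk'L with rfl | rfl
  · exact Or.inl IntermediateField.finrank_bot
  · exact Or.inr hn

/-- Let `k ⊆ L ⊆ M` with `M/k` finite Galois, `L` of degree `n ≥ 2` over `k` with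
Galois closure `M`, such that `Gal(M/k)` acts on the `n` embeddings of `L` into `M`
as the full symmetric group. Then every subextension `k'` of `L/k` has degree `1`
or `n` over `k`. -/
theorem stmt_9 (k M : Type*) [Field k] [Field M] [Algebra k M]
    [FiniteDimensional k M] [IsGalois k M]
    (L : IntermediateField k M) (hclosure : IntermediateField.normalClosure k L M = ⊤)
    (n : ℕ) (hn : Module.finrank k L = n) (hn2 : 2 ≤ n)
    (e : (M ≃ₐ[k] M) ≃* Equiv.Perm (L →ₐ[k] M))
    (hcompat : ∀ (σ : M ≃ₐ[k] M) (f : L →ₐ[k] M),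
      e σ f = σ.toAlgHom.comp f)
    (k' : IntermediateField k M) (hk' : k' ≤ L) :
    Module.finrank k k' = 1 ∨ Module.finrank k k' = n :=
  stmt_9_general k M L n hn e hcompat k' hk'
end

section
/- Suppose p : E → B is a covering map (finite covering space) of topological spaces, B is path-connected, and f : B' → B is a continuous map from a path-connected space B' such that the induced map π₁(B', b') → π₁(B, b) is surjective. If E is path-connected, then the pullback covering f*E → B' is also path-connected. -/
open CategoryTheory
open scoped FundamentalGroupoid

universe u

/-!
Every point `(x, e)` of the pullback is joined to the fibre over `b'` by lifting the image under
`f` of a path from `x` to `b'`. Two points `e₀, e₁` of that fibre are the ends of a path `α` in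
`E`; by π₁-surjectivity the loop `p ∘ α` is homotopic to `f ∘ l` for a loop `l` at `b'`, so by
homotopy invariance of lifts the lift of `f ∘ l` starting at `e₀` ends at `e₁`, and together
with `l` it is a path from `(b', e₀)` to `(b', e₁)` in the pullback.
-/

theorem FundamentalGroupoid.exists_map_eq_of_surjective_mapAut {X Y : Type u}
    [TopologicalSpace X] [TopologicalSpace Y] (f : C(X, Y)) (x : X)
    (hf : Function.Surjective (Functor.mapAut (FundamentalGroupoid.mk x)
      (FundamentalGroupoid.fundamentalGroupoidFunctor.map
        (X := TopCat.of X) (Y := TopCat.of Y) (TopCat.ofHom f))))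
    (γ : Path.Homotopic.Quotient (f x) (f x)) :
    ∃ l : Path.Homotopic.Quotient x x, l.map f = γ := by
  obtain ⟨g, hg⟩ := hf ((Groupoid.isoEquivHom _ _).symm γ)
  exact ⟨g.hom, congrArg Iso.hom hg⟩

namespace IsCoveringMap

variable {E X : Type*} [TopologicalSpace E] [TopologicalSpace X] {p : E → X}

theorem surjective_of_pathConnectedSpace (cov : IsCoveringMap p) [Nonempty E]
    [PathConnectedSpace X] : Function.Surjective p := fun x =>
  let e := Classical.arbitrary E
  ⟨_, (cov.monodromy (.mk (PathConnectedSpace.somePath (p e) x)) ⟨e, rfl⟩).2⟩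

variable {B' : Type*} [TopologicalSpace B'] (cov : IsCoveringMap p) (f : C(B', X))
include cov

theorem joined_pullback_monodromy {x y : B'} (γ : Path x y) (e : p ⁻¹' {f x}) :
    Joined (X := {q : B' × E // f q.1 = p q.2}) ⟨(x, e), Eq.symm e.2⟩
      ⟨(y, cov.monodromy (.mk (γ.map f.continuous)) e),
        Eq.symm (cov.monodromy (.mk (γ.map f.continuous)) e).2⟩ := by
  set Γ := cov.liftPath (γ.map f.continuous) e (by simpa using Eq.symm e.2)
  have hΓ (t) : f (γ t) = p (Γ t) :=
    congr_fun (cov.liftPath_lifts (γ.map f.continuous) _ _).symm t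
  refine ⟨⟨⟨fun t => ⟨(γ t, Γ t), hΓ t⟩, by fun_prop⟩, ?_, ?_⟩⟩
  · exact Subtype.ext (Prod.ext γ.source (cov.liftPath_zero ..))
  · exact Subtype.ext (Prod.ext γ.target rfl)

theorem joined_pullback_of_mem_fiber [PathConnectedSpace E] {x : B'}
    (hf : ∀ γ : Path.Homotopic.Quotient (f x) (f x), ∃ l : Path.Homotopic.Quotient x x,
      l.map f = γ)
    (e₀ e₁ : p ⁻¹' {f x}) :
    Joined (X := {q : B' × E // f q.1 = p q.2})
      ⟨(x, e₀), Eq.symm e₀.2⟩ ⟨(x, e₁), Eq.symm e₁.2⟩ := by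
  let α := PathConnectedSpace.somePath (e₀ : E) e₁
  let γ : Path (f x) (f x) := (α.map cov.continuous).cast (Eq.symm e₀.2) (Eq.symm e₁.2)
  obtain ⟨l, hl⟩ := hf (.mk γ)
  obtain ⟨l, rfl⟩ := Path.Homotopic.Quotient.mk_surjective l
  have hmonodromy : cov.monodromy (.mk (l.map f.continuous)) e₀ = e₁ := by
    rw [Path.Homotopic.Quotient.mk_map, hl]
    exact cov.monodromy_eq_of_map_eq (Γ := .mk α) rfl
  simpa only [hmonodromy] using cov.joined_pullback_monodromy f l e₀

theorem pathConnectedSpace_pullback [PathConnectedSpace X] [PathConnectedSpace B']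
    [PathConnectedSpace E] (x : B')
    (hf : ∀ γ : Path.Homotopic.Quotient (f x) (f x), ∃ l : Path.Homotopic.Quotient x x,
      l.map f = γ) :
    PathConnectedSpace {q : B' × E // f q.1 = p q.2} := by
  obtain ⟨e, he⟩ := cov.surjective_of_pathConnectedSpace (f x)
  have toFiber (q : {q : B' × E // f q.1 = p q.2}) :
      ∃ e : p ⁻¹' {f x}, Joined q ⟨(x, e), Eq.symm e.2⟩ :=
    ⟨_, cov.joined_pullback_monodromy f (PathConnectedSpace.somePath q.1.1 x) ⟨q.1.2, q.2.symm⟩⟩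
  refine ⟨⟨⟨(x, e), he.symm⟩⟩, fun q₀ q₁ => ?_⟩
  obtain ⟨e₀, h₀⟩ := toFiber q₀
  obtain ⟨e₁, h₁⟩ := toFiber q₁
  exact (h₀.trans (cov.joined_pullback_of_mem_fiber f hf e₀ e₁)).trans h₁.symm

end IsCoveringMap

/-- If `p : E → B` is a covering map with `E` path-connected, and `f : B' → B` is a
continuous map of path-connected spaces inducing a surjection
`π₁(B', b') → π₁(B, f b')`, then the pullback covering `f*E → B'` is path-connected. -/
theorem stmt_16 {E B B' : Type} [TopologicalSpace E] [TopologicalSpace B]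
    [TopologicalSpace B'] (p : E → B) (hp : IsCoveringMap p)
    [PathConnectedSpace B] [PathConnectedSpace B'] [PathConnectedSpace E]
    (f : C(B', B)) (b' : B')
    (hsurj : Function.Surjective
      (Functor.mapAut (FundamentalGroupoid.mk b')
        (FundamentalGroupoid.fundamentalGroupoidFunctor.map
          (X := TopCat.of B') (Y := TopCat.of B) (TopCat.ofHom f)))) :
    PathConnectedSpace {q : B' × E // f q.1 = p q.2} :=
  hp.pathConnectedSpace_pullback f b'
    (FundamentalGroupoid.exists_map_eq_of_surjective_mapAut f b' hsurj)
end
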